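/- For every prime p > 3, Σ_{a=1}^{p-1} 1/a^{p-1} ≡ p·B_{2p-2} − 3p·B_{p-1} + 3(p−1) (mod p³). -/

import Mathlib

/-- `a ≡ b (mod p^n)` as rationals: `p^n` divides the numerator of `a - b`,
the denominator being prime to `p`. -/
def rcong (p n : ℕ) (a b : ℚ) : Prop :=
  a = b ∨ (n : ℤ) ≤ padicValRat p (a - b)

open Finset IsUltrametricDist

private lemma five_pow_aux : ∀ v : ℕ, 1 ≤ v → v + 4 ≤ 5 ^ v := by
  intro v hv
  induction v with
  | zero => omega
  | succ n ih =>
    rcases Nat.eq_zero_or_pos n with rfl | hn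
    · norm_num
    · have h1 := ih hn
      have h2 : 1 ≤ 5 ^ n := Nat.one_le_pow _ _ (by norm_num)
      calc n + 1 + 4 ≤ 5 ^ n + 1 := by omega
        _ ≤ 5 ^ (n + 1) := by rw [pow_succ]; omega

section Padic

variable {p : ℕ} [hp : Fact p.Prime]

lemma norm_rat_le_of_le_val {q : ℚ} (hq : q ≠ 0) {c : ℤ} (h : c ≤ padicValRat p q) :
    ‖(q : ℚ_[p])‖ ≤ (p : ℝ) ^ (-c) := by
  rw [Padic.eq_padicNorm, padicNorm.eq_zpow_of_nonzero hq]
  push_cast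
  apply zpow_le_zpow_right₀ (by exact_mod_cast hp.out.one_lt.le)
  omega

lemma le_val_of_norm_rat_le {q : ℚ} (hq : q ≠ 0) {c : ℤ}
    (h : ‖(q : ℚ_[p])‖ ≤ (p : ℝ) ^ (-c)) : c ≤ padicValRat p q := by
  rw [Padic.eq_padicNorm, padicNorm.eq_zpow_of_nonzero hq] at h
  push_cast at h
  have := (zpow_le_zpow_iff_right₀ (by exact_mod_cast hp.out.one_lt : (1:ℝ) < p)).mp h
  omega

lemma val_add_one_le {j : ℕ} (hj : 0 < j) : padicValNat p j + 1 ≤ j := by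
  have h1 := Nat.le_of_dvd hj (pow_padicValNat_dvd (p := p) (n := j))
  have h2 : padicValNat p j < 2 ^ padicValNat p j := Nat.lt_two_pow_self
  have h3 : 2 ^ padicValNat p j ≤ p ^ padicValNat p j :=
    Nat.pow_le_pow_left hp.out.two_le _
  omega

lemma val_add_min_le (hp5 : 5 ≤ p) {j : ℕ} (hj : 0 < j) :
    padicValNat p j + min j 4 ≤ j := by
  have h1 := Nat.le_of_dvd hj (pow_padicValNat_dvd (p := p) (n := j))
  rcases Nat.eq_zero_or_pos (padicValNat p j) with h | h
  · omega
  · have h5 := five_pow_aux _ h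
    have h6 : 5 ^ padicValNat p j ≤ p ^ padicValNat p j := Nat.pow_le_pow_left hp5 _
    omega

lemma norm_ppow_div_le {j c : ℕ} (hj : 0 < j) (h : padicValNat p j + c ≤ j) :
    ‖((((p : ℚ) ^ j / (j : ℚ)) : ℚ) : ℚ_[p])‖ ≤ (p : ℝ) ^ (-(c : ℤ)) := by
  have hp0 : (p : ℚ) ≠ 0 := Nat.cast_ne_zero.mpr hp.out.ne_zero
  have hj0 : (j : ℚ) ≠ 0 := Nat.cast_ne_zero.mpr hj.ne'
  have hq : ((p : ℚ) ^ j / (j : ℚ)) ≠ 0 := div_ne_zero (pow_ne_zero _ hp0) hj0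
  apply norm_rat_le_of_le_val hq
  rw [padicValRat.div (pow_ne_zero _ hp0) hj0, padicValRat.pow (p := p) (p : ℚ),
    padicValRat.self hp.out.one_lt]
  have hv : (padicValNat p j : ℤ) = padicValRat p (j : ℚ) := padicValRat_of_nat j
  omega

lemma norm_natCast_le_one (n : ℕ) : ‖((n : ℚ) : ℚ_[p])‖ ≤ 1 := by
  have h := Padic.norm_int_le_one (p := p) (n : ℤ)
  have : (((n : ℤ) : ℚ_[p])) = ((n : ℚ) : ℚ_[p]) := by push_cast; ring
  rwa [this] at h

lemma nonarch_sub (x y : ℚ_[p]) {C : ℝ} (hx : ‖x‖ ≤ C) (hy : ‖y‖ ≤ C) : ‖x - y‖ ≤ C := by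
  have h := Padic.nonarchimedean x (-y)
  rw [← sub_eq_add_neg, norm_neg] at h
  exact h.trans (max_le hx hy)

lemma nonarch_add (x y : ℚ_[p]) {C : ℝ} (hx : ‖x‖ ≤ C) (hy : ‖y‖ ≤ C) : ‖x + y‖ ≤ C :=
  (Padic.nonarchimedean x y).trans (max_le hx hy)

end Padic

lemma faulhaber_key (n m : ℕ) :
    (∑ a ∈ range n, (a : ℚ) ^ m) =
      (n : ℚ) * bernoulli m +
        ∑ i ∈ range m, bernoulli i * (m.choose i) * (n : ℚ) ^ (m + 1 - i) / (m + 1 - i : ℕ) := by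
  rw [sum_range_pow n m, Finset.sum_range_succ, add_comm]
  congr 1
  · have hc : (m + 1).choose m = m + 1 := Nat.choose_succ_self_right m
    rw [hc]
    have h1 : ((m : ℚ) + 1) ≠ 0 := by positivity
    have h2 : m + 1 - m = 1 := by omega
    rw [h2]
    push_cast
    field_simp
  · apply Finset.sum_congr rfl
    intro i hi
    have hi' : i < m := Finset.mem_range.mp hi
    have h1 : ((m : ℚ) + 1) ≠ 0 := by positivity
    have h2 : ((m + 1 - i : ℕ) : ℚ) ≠ 0 := by
      have h3 : 0 < m + 1 - i := by omega
      exact (Nat.cast_pos.mpr h3).ne'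
    rw [div_eq_div_iff (by push_cast; exact h1) h2]
    have hc := Nat.choose_mul_succ_eq m i
    have hc' : ((m.choose i : ℚ) * (m + 1)) = (((m + 1).choose i : ℚ) * ((m + 1 - i : ℕ) : ℚ)) := by
      exact_mod_cast congrArg (Nat.cast (R := ℚ)) hc
    linear_combination (-(bernoulli i * (n : ℚ) ^ (m + 1 - i))) * hc'

section Main

variable {p : ℕ} [hp : Fact p.Prime]

/-- Norm bound for a single Faulhaber remainder term. -/
lemma mul_zpow_neg_nat {x : ℝ} (hx : x ≠ 0) (c : ℕ) (hc : 1 ≤ c) :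
    x * x ^ (-(c : ℤ)) = x ^ (-((c - 1 : ℕ) : ℤ)) := by
  rw [← zpow_one_add₀ hx]
  congr 1
  omega

lemma norm_term_le {m i : ℕ} (hi : i < m) {c : ℕ}
    (hc : padicValNat p (m + 1 - i) + c ≤ m + 1 - i) {B : ℝ}
    (hB : 0 ≤ B) (hBle : ‖((bernoulli i : ℚ) : ℚ_[p])‖ ≤ B) :
    ‖((bernoulli i * (m.choose i) * (p : ℚ) ^ (m + 1 - i) / (m + 1 - i : ℕ) : ℚ) : ℚ_[p])‖
      ≤ B * (p : ℝ) ^ (-(c : ℤ)) := by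
  have hsplit : ((bernoulli i * (m.choose i) * (p : ℚ) ^ (m + 1 - i) / (m + 1 - i : ℕ) : ℚ) : ℚ_[p])
      = ((bernoulli i : ℚ) : ℚ_[p]) * (((m.choose i : ℕ) : ℚ) : ℚ_[p])
        * ((((p : ℚ) ^ (m + 1 - i) / ((m + 1 - i : ℕ) : ℚ)) : ℚ) : ℚ_[p]) := by
    push_cast
    ring
  rw [hsplit, norm_mul, norm_mul]
  have h1 : ‖(((m.choose i : ℕ) : ℚ) : ℚ_[p])‖ ≤ 1 := norm_natCast_le_one _
  have h2 := norm_ppow_div_le (p := p) (j := m + 1 - i) (c := c) (by omega) hc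
  calc ‖((bernoulli i : ℚ) : ℚ_[p])‖ * ‖(((m.choose i : ℕ) : ℚ) : ℚ_[p])‖
        * ‖((((p : ℚ) ^ (m + 1 - i) / ((m + 1 - i : ℕ) : ℚ)) : ℚ) : ℚ_[p])‖
      ≤ B * 1 * (p : ℝ) ^ (-(c : ℤ)) := by
        gcongr <;> first | exact norm_nonneg _ | assumption
    _ = B * (p : ℝ) ^ (-(c : ℤ)) := by ring

lemma norm_range_sum_le (m : ℕ) : ‖((∑ a ∈ range p, (a : ℚ) ^ m : ℚ) : ℚ_[p])‖ ≤ 1 := by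
  have hcast : ((∑ a ∈ range p, (a : ℚ) ^ m : ℚ) : ℚ_[p])
      = ∑ a ∈ range p, (((a : ℚ) ^ m : ℚ) : ℚ_[p]) := by push_cast; ring
  rw [hcast]
  apply norm_sum_le_of_forall_le_of_nonneg zero_le_one
  intro a _
  have : (((a : ℚ) ^ m : ℚ) : ℚ_[p]) = (((a : ℚ) : ℚ_[p])) ^ m := by push_cast; ring
  rw [this, norm_pow]
  exact pow_le_one₀ (norm_nonneg _) (norm_natCast_le_one a)

/-- `p * B_m` is a `p`-adic integer, i.e. `‖B_m‖ ≤ p`. -/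
lemma norm_bernoulli_le (m : ℕ) : ‖((bernoulli m : ℚ) : ℚ_[p])‖ ≤ (p : ℝ) := by
  induction m using Nat.strong_induction_on with
  | _ m ih =>
  have hkey : (p : ℚ) * bernoulli m = (∑ a ∈ range p, (a : ℚ) ^ m)
      - ∑ i ∈ range m, bernoulli i * (m.choose i) * (p : ℚ) ^ (m + 1 - i) / (m + 1 - i : ℕ) := by
    have := faulhaber_key p m
    linarith
  have hnorm : ‖(((p : ℚ) * bernoulli m : ℚ) : ℚ_[p])‖ ≤ 1 := by
    rw [hkey]
    rw [Rat.cast_sub]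
    apply nonarch_sub
    · exact norm_range_sum_le m
    · rw [Rat.cast_sum]
      apply norm_sum_le_of_forall_le_of_nonneg zero_le_one
      intro i hi
      have hi' : i < m := Finset.mem_range.mp hi
      have hb := norm_term_le (p := p) hi' (c := 1)
        (val_add_one_le (by omega)) (B := (p : ℝ))
        (by positivity) (ih i hi')
      refine hb.trans (le_of_eq ?_)
      have hppos : (0 : ℝ) < p := by exact_mod_cast hp.out.pos
      rw [zpow_neg]
      rw [show ((1:ℕ):ℤ) = (1:ℤ) by norm_num, zpow_one]
      field_simp
  have hps : (((p : ℚ) * bernoulli m : ℚ) : ℚ_[p])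
      = ((p : ℚ) : ℚ_[p]) * ((bernoulli m : ℚ) : ℚ_[p]) := by push_cast; ring
  rw [hps, norm_mul] at hnorm
  have hnp : ‖((p : ℚ) : ℚ_[p])‖ = ((p : ℝ))⁻¹ := by
    have : ((p : ℚ) : ℚ_[p]) = (p : ℚ_[p]) := by push_cast; ring
    rw [this]; exact Padic.norm_p
  rw [hnp] at hnorm
  have hppos : (0 : ℝ) < p := by exact_mod_cast hp.out.pos
  rw [inv_mul_le_iff₀ hppos] at hnorm
  simpa using hnorm

lemma zmod_sum_eq (m : ℕ) :
    (∑ a ∈ range p, ((a : ZMod p)) ^ m) = ∑ x : ZMod p, x ^ m := by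
  haveI : NeZero p := ⟨hp.out.ne_zero⟩
  apply Finset.sum_bij' (fun (a : ℕ) (_ : a ∈ range p) => (a : ZMod p))
    (fun (x : ZMod p) (_ : x ∈ Finset.univ) => x.val)
  · intro a ha
    exact Finset.mem_univ _
  · intro x hx
    exact Finset.mem_range.mpr (ZMod.val_lt x)
  · intro a ha
    exact ZMod.val_cast_of_lt (Finset.mem_range.mp ha)
  · intro x hx
    exact ZMod.natCast_zmod_val x
  · intro a ha
    rfl

lemma norm_range_sum_small {m : ℕ} (hm : 0 < m)
    (hsum : (∑ x : ZMod p, x ^ m) = 0) :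
    ‖((∑ a ∈ range p, (a : ℚ) ^ m : ℚ) : ℚ_[p])‖ ≤ (p : ℝ) ^ (-(1 : ℕ) : ℤ) := by
  have hdvd : ((p : ℤ)) ^ (1 : ℕ) ∣ ∑ a ∈ range p, (a : ℤ) ^ m := by
    rw [pow_one]
    rw [← ZMod.intCast_zmod_eq_zero_iff_dvd]
    push_cast
    rw [zmod_sum_eq, hsum]
  have hq : ((∑ a ∈ range p, (a : ℚ) ^ m : ℚ) : ℚ_[p])
      = (((∑ a ∈ range p, (a : ℤ) ^ m : ℤ) : ℤ) : ℚ_[p]) := by push_cast; ring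
  rw [hq]
  exact (Padic.norm_int_le_pow_iff_dvd _ _).mpr hdvd

lemma norm_bernoulli_le_one {m : ℕ} (hp5 : 5 ≤ p) (hm : 0 < m)
    (hsum : (∑ x : ZMod p, x ^ m) = 0) :
    ‖((bernoulli m : ℚ) : ℚ_[p])‖ ≤ 1 := by
  have hkey : (p : ℚ) * bernoulli m = (∑ a ∈ range p, (a : ℚ) ^ m)
      - ∑ i ∈ range m, bernoulli i * (m.choose i) * (p : ℚ) ^ (m + 1 - i) / (m + 1 - i : ℕ) := by
    have := faulhaber_key p m
    linarith
  have hppos : (0 : ℝ) < p := by exact_mod_cast hp.out.pos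
  have hnorm : ‖(((p : ℚ) * bernoulli m : ℚ) : ℚ_[p])‖ ≤ (p : ℝ) ^ (-(1 : ℕ) : ℤ) := by
    rw [hkey, Rat.cast_sub]
    apply nonarch_sub
    · exact norm_range_sum_small hm hsum
    · rw [Rat.cast_sum]
      apply norm_sum_le_of_forall_le_of_nonneg (by positivity)
      intro i hi
      have hi' : i < m := Finset.mem_range.mp hi
      have hj2 : 2 ≤ m + 1 - i := by omega
      have hc : padicValNat p (m + 1 - i) + 2 ≤ m + 1 - i := by
        have := val_add_min_le (p := p) hp5 (j := m + 1 - i) (by omega)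
        omega
      have hb := norm_term_le (p := p) hi' (c := 2) hc (B := (p : ℝ))
        (by positivity) (norm_bernoulli_le i)
      refine hb.trans (le_of_eq ?_)
      rw [mul_zpow_neg_nat hppos.ne' 2 (by norm_num)]
  have hps : (((p : ℚ) * bernoulli m : ℚ) : ℚ_[p])
      = ((p : ℚ) : ℚ_[p]) * ((bernoulli m : ℚ) : ℚ_[p]) := by push_cast; ring
  rw [hps, norm_mul] at hnorm
  have hnp : ‖((p : ℚ) : ℚ_[p])‖ = ((p : ℝ))⁻¹ := by
    have : ((p : ℚ) : ℚ_[p]) = (p : ℚ_[p]) := by push_cast; ring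
    rw [this]; exact Padic.norm_p
  rw [hnp, inv_mul_le_iff₀ hppos] at hnorm
  refine hnorm.trans (le_of_eq ?_)
  rw [mul_zpow_neg_nat hppos.ne' 1 le_rfl]
  norm_num

lemma norm_psum_sub_bern (hp5 : 5 ≤ p) {k : ℕ} (hk4 : 4 ≤ k) (hkeven : Even k)
    (hbk2 : ‖((bernoulli (k - 2) : ℚ) : ℚ_[p])‖ ≤ 1) :
    ‖(((∑ a ∈ range p, (a : ℚ) ^ k) - (p : ℚ) * bernoulli k : ℚ) : ℚ_[p])‖
      ≤ (p : ℝ) ^ (-(3 : ℕ) : ℤ) := by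
  have hppos : (0 : ℝ) < p := by exact_mod_cast hp.out.pos
  have hkey : (∑ a ∈ range p, (a : ℚ) ^ k) - (p : ℚ) * bernoulli k
      = ∑ i ∈ range k, bernoulli i * (k.choose i) * (p : ℚ) ^ (k + 1 - i) / (k + 1 - i : ℕ) := by
    have := faulhaber_key p k
    linarith
  rw [hkey, Rat.cast_sum]
  apply norm_sum_le_of_forall_le_of_nonneg (by positivity)
  intro i hi
  have hi' : i < k := Finset.mem_range.mp hi
  rcases eq_or_ne i (k - 1) with rfl | hne1
  · have hodd : Odd (k - 1) := Nat.Even.sub_odd (by omega) hkeven odd_one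
    have hb0 : bernoulli (k - 1) = 0 := by
      rw [bernoulli_eq_bernoulli'_of_ne_one (by omega)]
      exact bernoulli'_eq_zero_of_odd hodd (by omega)
    rw [hb0]
    simp only [zero_mul, zero_div, Rat.cast_zero, norm_zero]
    positivity
  rcases eq_or_ne i (k - 2) with rfl | hne2
  · have h3 : k + 1 - (k - 2) = 3 := by omega
    have hc : padicValNat p (k + 1 - (k - 2)) + 3 ≤ k + 1 - (k - 2) := by
      rw [h3]
      have : padicValNat p 3 = 0 := padicValNat.eq_zero_of_not_dvd
        (fun h => absurd (Nat.le_of_dvd (by norm_num) h) (by omega))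
      omega
    have hb := norm_term_le (p := p) hi' (c := 3) hc (B := 1) zero_le_one hbk2
    simpa using hb
  · have hj4 : 4 ≤ k + 1 - i := by omega
    have hc : padicValNat p (k + 1 - i) + 4 ≤ k + 1 - i := by
      have := val_add_min_le (p := p) hp5 (j := k + 1 - i) (by omega)
      omega
    have hb := norm_term_le (p := p) hi' (c := 4) hc (B := (p : ℝ))
      (by positivity) (norm_bernoulli_le i)
    refine hb.trans (le_of_eq ?_)
    rw [mul_zpow_neg_nat hppos.ne' 4 (by norm_num)]

lemma norm_part1 (hp5 : 5 ≤ p) :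
    ‖(((∑ a ∈ Icc 1 (p - 1), 1 / (a : ℚ) ^ (p - 1))
        - ((∑ a ∈ Icc 1 (p - 1), (a : ℚ) ^ (2 * p - 2))
          - 3 * (∑ a ∈ Icc 1 (p - 1), (a : ℚ) ^ (p - 1)) + 3 * ((p : ℚ) - 1)) : ℚ) : ℚ_[p])‖
      ≤ (p : ℝ) ^ (-(3 : ℕ) : ℤ) := by
  have hppos : (0 : ℝ) < p := by exact_mod_cast hp.out.pos
  have hcard : (((Icc 1 (p - 1)).card : ℕ) : ℚ) = (p : ℚ) - 1 := by
    rw [Nat.card_Icc]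
    push_cast [Nat.cast_sub (by omega : 1 ≤ p)]
    ring
  have hcomb : (∑ a ∈ Icc 1 (p - 1), 1 / (a : ℚ) ^ (p - 1))
        - ((∑ a ∈ Icc 1 (p - 1), (a : ℚ) ^ (2 * p - 2))
          - 3 * (∑ a ∈ Icc 1 (p - 1), (a : ℚ) ^ (p - 1)) + 3 * ((p : ℚ) - 1))
      = ∑ a ∈ Icc 1 (p - 1), (1 / (a : ℚ) ^ (p - 1)
          - ((a : ℚ) ^ (2 * p - 2) - 3 * (a : ℚ) ^ (p - 1) + 3)) := by
    rw [Finset.sum_sub_distrib, Finset.sum_add_distrib, Finset.sum_sub_distrib,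
      ← Finset.mul_sum, Finset.sum_const, nsmul_eq_mul, hcard]
    ring
  rw [hcomb, Rat.cast_sum]
  apply norm_sum_le_of_forall_le_of_nonneg (by positivity)
  intro a ha
  rw [Finset.mem_Icc] at ha
  have hnd : ¬ p ∣ a := fun h => absurd (Nat.le_of_dvd (by omega) h) (by omega)
  have ha0 : (a : ℚ) ≠ 0 := Nat.cast_ne_zero.mpr (by omega)
  have hy0 : (a : ℚ) ^ (p - 1) ≠ 0 := pow_ne_zero _ ha0
  have hid : 1 / (a : ℚ) ^ (p - 1) - ((a : ℚ) ^ (2 * p - 2) - 3 * (a : ℚ) ^ (p - 1) + 3)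
      = -(((a : ℚ) ^ (p - 1) - 1) ^ 3) / (a : ℚ) ^ (p - 1) := by
    rw [show 2 * p - 2 = (p - 1) + (p - 1) by omega, pow_add]
    field_simp
    ring
  rw [hid]
  have hcast : ((-(((a : ℚ) ^ (p - 1) - 1) ^ 3) / (a : ℚ) ^ (p - 1) : ℚ) : ℚ_[p])
      = -((((a : ℚ) ^ (p - 1) - 1 : ℚ) : ℚ_[p]) ^ 3) / (((a : ℚ) : ℚ_[p])) ^ (p - 1) := by
    push_cast
    ring
  rw [hcast]
  have hna : ‖((a : ℚ) : ℚ_[p])‖ = 1 := by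
    refine le_antisymm (norm_natCast_le_one a) ?_
    by_contra hlt
    push_neg at hlt
    have h1 : ‖(((a : ℤ)) : ℚ_[p])‖ < 1 := by
      have : (((a : ℤ)) : ℚ_[p]) = ((a : ℚ) : ℚ_[p]) := by push_cast; ring
      rw [this]
      exact hlt
    exact hnd (by exact_mod_cast (Padic.norm_intCast_lt_one_iff).mp h1)
  have hdvd : ((p : ℤ)) ^ (1 : ℕ) ∣ (a : ℤ) ^ (p - 1) - 1 := by
    rw [pow_one, ← ZMod.intCast_zmod_eq_zero_iff_dvd]
    push_cast
    rw [ZMod.pow_card_sub_one_eq_one (by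
      rw [Ne, ZMod.natCast_eq_zero_iff]
      exact hnd)]
    ring
  have hYnorm : ‖(((a : ℚ) ^ (p - 1) - 1 : ℚ) : ℚ_[p])‖ ≤ (p : ℝ) ^ (-(1 : ℕ) : ℤ) := by
    have hZ : (((a : ℚ) ^ (p - 1) - 1 : ℚ) : ℚ_[p]) = (((a : ℤ) ^ (p - 1) - 1 : ℤ) : ℚ_[p]) := by
      push_cast
      ring
    rw [hZ]
    exact (Padic.norm_int_le_pow_iff_dvd _ _).mpr hdvd
  rw [norm_div, norm_neg, norm_pow, norm_pow, hna, one_pow, div_one]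
  calc ‖(((a : ℚ) ^ (p - 1) - 1 : ℚ) : ℚ_[p])‖ ^ 3 ≤ ((p : ℝ) ^ (-(1 : ℕ) : ℤ)) ^ 3 := by
        gcongr
    _ = (p : ℝ) ^ (-(3 : ℕ) : ℤ) := by
        rw [← zpow_natCast ((p : ℝ) ^ (-(1 : ℕ) : ℤ)) 3, ← zpow_mul]
        norm_num

lemma sum_Icc_pow_eq {k : ℕ} (hk : 0 < k) :
    ∑ a ∈ Icc 1 (p - 1), (a : ℚ) ^ k = ∑ a ∈ range p, (a : ℚ) ^ k := by
  apply Finset.sum_subset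
  · intro a ha
    rw [Finset.mem_Icc] at ha
    rw [Finset.mem_range]
    have := hp.out.pos
    omega
  · intro a ha hna
    rw [Finset.mem_range] at ha
    rw [Finset.mem_Icc] at hna
    have ha0 : a = 0 := by omega
    subst ha0
    simp [zero_pow hk.ne']

lemma zmod_pow_sum_vanish_1 (hp5 : 5 ≤ p) : (∑ x : ZMod p, x ^ (p - 3)) = 0 := by
  apply FiniteField.sum_pow_lt_card_sub_one
  rw [ZMod.card]
  omega

lemma zmod_pow_sum_vanish_2 (hp5 : 5 ≤ p) : (∑ x : ZMod p, x ^ (2 * p - 4)) = 0 := by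
  have heq : ∀ x : ZMod p, x ^ (2 * p - 4) = x ^ (p - 3) := by
    intro x
    rcases eq_or_ne x 0 with rfl | hx
    · rw [zero_pow (by omega), zero_pow (by omega)]
    · rw [show 2 * p - 4 = (p - 3) + (p - 1) by omega, pow_add,
        ZMod.pow_card_sub_one_eq_one hx, mul_one]
  rw [Finset.sum_congr rfl (fun x _ => heq x)]
  exact zmod_pow_sum_vanish_1 hp5

lemma rcong_of_norm {n : ℕ} {a b : ℚ}
    (h : ‖((a - b : ℚ) : ℚ_[p])‖ ≤ (p : ℝ) ^ (-(n : ℕ) : ℤ)) : rcong p n a b := by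
  by_cases hab : a = b
  · exact Or.inl hab
  · right
    exact le_val_of_norm_rat_le (sub_ne_zero.mpr hab) h

theorem sun_harmonic_p_sub_one (p : ℕ) (hp : p.Prime) (hgt : 3 < p) :
    rcong p 3 (∑ a ∈ Finset.Icc 1 (p - 1), 1 / (a : ℚ) ^ (p - 1))
      ((p : ℚ) * bernoulli (2 * p - 2) - 3 * (p : ℚ) * bernoulli (p - 1)
        + 3 * ((p : ℚ) - 1)) := by
  haveI : Fact p.Prime := ⟨hp⟩
  have h4 : p ≠ 4 := by rintro rfl; norm_num at hp
  have hp5 : 5 ≤ p := by omega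
  apply rcong_of_norm (n := 3)
  have hQ1 := sum_Icc_pow_eq (p := p) (k := p - 1) (by omega)
  have hQ2 := sum_Icc_pow_eq (p := p) (k := 2 * p - 2) (by omega)
  have hdecomp : (∑ a ∈ Finset.Icc 1 (p - 1), 1 / (a : ℚ) ^ (p - 1))
      - ((p : ℚ) * bernoulli (2 * p - 2) - 3 * (p : ℚ) * bernoulli (p - 1) + 3 * ((p : ℚ) - 1))
      = ((∑ a ∈ Icc 1 (p - 1), 1 / (a : ℚ) ^ (p - 1))
          - ((∑ a ∈ Icc 1 (p - 1), (a : ℚ) ^ (2 * p - 2))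
            - 3 * (∑ a ∈ Icc 1 (p - 1), (a : ℚ) ^ (p - 1)) + 3 * ((p : ℚ) - 1)))
        + ((∑ a ∈ range p, (a : ℚ) ^ (2 * p - 2)) - (p : ℚ) * bernoulli (2 * p - 2))
        - 3 * ((∑ a ∈ range p, (a : ℚ) ^ (p - 1)) - (p : ℚ) * bernoulli (p - 1)) := by
    rw [← hQ1, ← hQ2]
    ring
  rw [hdecomp]
  rw [Rat.cast_sub, Rat.cast_add, Rat.cast_mul]
  have hb1 : ‖(((∑ a ∈ Icc 1 (p - 1), 1 / (a : ℚ) ^ (p - 1))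
      - ((∑ a ∈ Icc 1 (p - 1), (a : ℚ) ^ (2 * p - 2))
        - 3 * (∑ a ∈ Icc 1 (p - 1), (a : ℚ) ^ (p - 1)) + 3 * ((p : ℚ) - 1)) : ℚ) : ℚ_[p])‖
      ≤ (p : ℝ) ^ (-(3 : ℕ) : ℤ) := norm_part1 hp5
  have heven1 : Even (p - 1) := Nat.Odd.sub_odd (hp.odd_of_ne_two (by omega)) odd_one
  have heven2 : Even (2 * p - 2) := ⟨p - 1, by omega⟩
  have hb2 : ‖((((∑ a ∈ range p, (a : ℚ) ^ (2 * p - 2)) - (p : ℚ) * bernoulli (2 * p - 2)) : ℚ) : ℚ_[p])‖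
      ≤ (p : ℝ) ^ (-(3 : ℕ) : ℤ) := by
    apply norm_psum_sub_bern hp5 (by omega) heven2
    rw [show 2 * p - 2 - 2 = 2 * p - 4 by omega]
    exact norm_bernoulli_le_one hp5 (by omega) (zmod_pow_sum_vanish_2 hp5)
  have hb3 : ‖((((∑ a ∈ range p, (a : ℚ) ^ (p - 1)) - (p : ℚ) * bernoulli (p - 1)) : ℚ) : ℚ_[p])‖
      ≤ (p : ℝ) ^ (-(3 : ℕ) : ℤ) := by
    apply norm_psum_sub_bern hp5 (by omega) heven1
    rw [show p - 1 - 2 = p - 3 by omega]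
    exact norm_bernoulli_le_one hp5 (by omega) (zmod_pow_sum_vanish_1 hp5)
  apply nonarch_sub
  · exact nonarch_add _ _ hb1 hb2
  · have h3cast : (((3 : ℚ)) : ℚ_[p]) = (((3 : ℕ) : ℚ) : ℚ_[p]) := by norm_num
    rw [norm_mul, h3cast]
    refine le_trans (mul_le_mul (norm_natCast_le_one 3) hb3 (norm_nonneg _) zero_le_one) ?_
    rw [one_mul]

end Main
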